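/- Let λ > 0, let U : [0,∞) → ℝ be smooth, and for y ≤ 0 define V(y) = 2 ∫₀^{−y} e^{−λx} U'(−x−y) dx. Then V(0) = 0 and, for every integer k ≥ 1, V^{(k)}(0) = 2 Σ_{j=1}^{k} (−1)^j λ^{k−j} U^{(j)}(0). In particular, if k ≥ 1 and U^{(j)}(0) = 0 for all 1 ≤ j ≤ k−1, then V^{(k)}(0) = 2(−1)^k U^{(k)}(0). -/

import Mathlib

open Set intervalIntegral
open scoped ContDiff

/-- The odd-extension correction `V(y) = 2∫₀^{−y} e^{−λx} U'(−x−y) dx`. -/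
noncomputable def Vcorr (lam : ℝ) (U : ℝ → ℝ) (y : ℝ) : ℝ :=
  2 * ∫ x in (0 : ℝ)..(-y), Real.exp (-(lam * x)) * deriv U (-x - y)

lemma iteratedDerivWithin_Iic_eq (f : ℝ → ℝ) (hf : ContDiff ℝ ∞ f) (k : ℕ) :
    Set.EqOn (iteratedDerivWithin k f (Set.Iic (0:ℝ))) (iteratedDeriv k f) (Set.Iic 0) := by
  induction k with
  | zero => intro x hx; simp
  | succ k ih =>
    intro x hx
    have hu : UniqueDiffOn ℝ (Set.Iic (0:ℝ)) := uniqueDiffOn_Iic 0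
    rw [iteratedDerivWithin_succ, iteratedDeriv_succ]
    rw [derivWithin_congr ih (ih hx)]
    exact DifferentiableAt.derivWithin
      ((hf.differentiable_iteratedDeriv k (ENat.natCast_lt_of_coe_top_le_withTop le_rfl k)).differentiableAt)
      (hu.uniqueDiffWithinAt hx)

/-- `V(0) = 0`, `V^{(k)}(0) = 2Σ_{j=1}^k (−1)^j λ^{k−j} U^{(j)}(0)` for `k ≥ 1`; in particular if
`U^{(j)}(0) = 0` for `1 ≤ j ≤ k−1` then `V^{(k)}(0) = 2(−1)^k U^{(k)}(0)`. -/
theorem Vcorr_deriv_at_zero (lam : ℝ) (hlam : 0 < lam) (U : ℝ → ℝ) (hU : ContDiff ℝ (⊤ : ℕ∞) U) :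
    Vcorr lam U 0 = 0 ∧
      (∀ k : ℕ, 1 ≤ k →
        iteratedDerivWithin k (Vcorr lam U) (Set.Iic (0 : ℝ)) 0 =
          2 * ∑ j ∈ Finset.Icc 1 k, (-1 : ℝ) ^ j * lam ^ (k - j) * iteratedDeriv j U 0) ∧
      (∀ k : ℕ, 1 ≤ k → (∀ j : ℕ, 1 ≤ j → j ≤ k - 1 → iteratedDeriv j U 0 = 0) →
        iteratedDerivWithin k (Vcorr lam U) (Set.Iic (0 : ℝ)) 0 =
          2 * (-1 : ℝ) ^ k * iteratedDeriv k U 0) := by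
  have hUinf : ContDiff ℝ ∞ U := hU.of_le (by simp)
  have hU' : ContDiff ℝ ∞ (deriv U) := (contDiff_infty_iff_deriv.mp hUinf).2
  set g : ℝ → ℝ := fun t => Real.exp (lam * t) * deriv U t with hg_def
  have hg : ContDiff ℝ ∞ g :=
    (Real.contDiff_exp.comp (contDiff_const.mul contDiff_id)).mul hU'
  set G : ℝ → ℝ := fun s => ∫ t in (0:ℝ)..s, g t with hG_def
  have hGd : ∀ s, HasDerivAt G (g s) s := fun s =>
    (hg.continuous.integral_hasStrictDerivAt 0 s).hasDerivAt
  have hG : ContDiff ℝ ∞ G := by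
    rw [contDiff_infty_iff_deriv]
    constructor
    · exact fun s => (hGd s).differentiableAt
    · have : deriv G = g := funext fun s => (hGd s).deriv
      rw [this]; exact hg
  -- change of variables
  have hVeq : Vcorr lam U = fun y => 2 * (Real.exp (lam * y) * G (-y)) := by
    funext y
    have h1 : ∀ x : ℝ, Real.exp (-(lam * x)) * deriv U (-x - y)
        = Real.exp (lam * y) • g (-y - x) := by
      intro x
      simp only [hg_def, smul_eq_mul, ← mul_assoc, ← Real.exp_add]
      ring_nf
    unfold Vcorr
    rw [intervalIntegral.integral_congr (fun x _ => h1 x)]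
    rw [intervalIntegral.integral_smul, intervalIntegral.integral_comp_sub_left g (-y)]
    simp [smul_eq_mul, mul_assoc]
    rfl
  have hV : ContDiff ℝ ∞ (Vcorr lam U) := by
    rw [hVeq]
    exact contDiff_const.mul
      ((Real.contDiff_exp.comp (contDiff_const.mul contDiff_id)).mul (hG.comp contDiff_neg))
  -- ODE: deriv V y = lam * V y - 2 * deriv U (-y)
  have hode : deriv (Vcorr lam U) = fun y => lam * Vcorr lam U y - 2 * deriv U (-y) := by
    funext y
    have he : HasDerivAt (fun y => Real.exp (lam * y)) (Real.exp (lam * y) * lam) y :=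
      (Real.hasDerivAt_exp (lam * y)).comp y
        (by simpa using (hasDerivAt_id y).const_mul lam)
    have hGn : HasDerivAt (fun y => G (-y)) (g (-y) * (-1)) y :=
      (hGd (-y)).comp y (hasDerivAt_neg y)
    have hprod : HasDerivAt (fun y => 2 * (Real.exp (lam * y) * G (-y)))
        (2 * (Real.exp (lam * y) * lam * G (-y) + Real.exp (lam * y) * (g (-y) * (-1)))) y :=
      (he.mul hGn).const_mul 2
    rw [hVeq]
    rw [hprod.deriv]
    have hexp : Real.exp (lam * y) * g (-y) = deriv U (-y) := by
      simp only [hg_def]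
      rw [← mul_assoc, ← Real.exp_add]
      simp [mul_comm, mul_neg]
    have : Real.exp (lam * y) * (g (-y) * (-1)) = -deriv U (-y) := by
      rw [mul_neg_one, mul_neg, hexp]
    rw [this]
    ring
  have hV0 : Vcorr lam U 0 = 0 := by
    rw [hVeq]; simp [hG_def]
  -- main induction on global iterated derivative
  have main : ∀ k : ℕ, iteratedDeriv k (Vcorr lam U) 0 =
      2 * ∑ j ∈ Finset.Icc 1 k, (-1 : ℝ) ^ j * lam ^ (k - j) * iteratedDeriv j U 0 := by
    intro k
    induction k with
    | zero => simpa using hV0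
    | succ k ih =>
      rw [iteratedDeriv_succ', hode]
      have hsub : ∀ y : ℝ, lam * Vcorr lam U y - 2 * deriv U (-y)
          = (fun y => lam * Vcorr lam U y) y + (fun y => (-2) * deriv U (-y)) y := by
        intro y; ring
      rw [funext hsub]
      have hf1 : ContDiff ℝ (k : ℕ∞) (fun y => lam * Vcorr lam U y) :=
        (contDiff_const.mul hV).of_le (by exact_mod_cast le_top)
      have hf2 : ContDiff ℝ (k : ℕ∞) (fun y => (-2 : ℝ) * deriv U (-y)) :=
        (contDiff_const.mul (hU'.comp contDiff_neg)).of_le (by exact_mod_cast le_top)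
      have hadd : iteratedDeriv k
          ((fun y => lam * Vcorr lam U y) + fun y => (-2 : ℝ) * deriv U (-y)) 0
          = iteratedDeriv k (fun y => lam * Vcorr lam U y) 0
            + iteratedDeriv k (fun y => (-2 : ℝ) * deriv U (-y)) 0 := by
        simp_rw [← iteratedDerivWithin_univ]
        exact iteratedDerivWithin_add (Set.mem_univ 0) uniqueDiffOn_univ
          hf1.contDiffWithinAt hf2.contDiffWithinAt
      have h1 : iteratedDeriv k (fun y => lam * Vcorr lam U y) 0
          = lam * iteratedDeriv k (Vcorr lam U) 0 := by
        simp_rw [← iteratedDerivWithin_univ]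
        exact iteratedDerivWithin_const_mul (Set.mem_univ 0) uniqueDiffOn_univ lam
          (hV.contDiffWithinAt.of_le (by exact_mod_cast le_top))
      have hcomp : ContDiff ℝ (k : ℕ∞) fun y : ℝ => deriv U (-y) :=
        (hU'.comp contDiff_neg).of_le (by exact_mod_cast le_top)
      have h2 : iteratedDeriv k (fun y => (-2 : ℝ) * deriv U (-y)) 0
          = (-2 : ℝ) * ((-1:ℝ) ^ k * iteratedDeriv (k+1) U 0) := by
        simp_rw [← iteratedDerivWithin_univ]
        rw [iteratedDerivWithin_const_mul (Set.mem_univ 0) uniqueDiffOn_univ (-2 : ℝ)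
          hcomp.contDiffWithinAt]
        simp_rw [iteratedDerivWithin_univ]
        rw [iteratedDeriv_comp_neg k (deriv U) 0, iteratedDeriv_succ']
        simp [smul_eq_mul]
      have hS : ∑ j ∈ Finset.Icc 1 k, (-1:ℝ)^j * lam^(k+1-j) * iteratedDeriv j U 0
          = lam * ∑ j ∈ Finset.Icc 1 k, (-1:ℝ)^j * lam^(k-j) * iteratedDeriv j U 0 := by
        rw [Finset.mul_sum]
        refine Finset.sum_congr rfl fun j hj => ?_
        have hj' : j ≤ k := (Finset.mem_Icc.mp hj).2
        have hkj : k + 1 - j = (k - j) + 1 := by omega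
        rw [hkj, pow_succ]; ring
      show iteratedDeriv k ((fun y => lam * Vcorr lam U y) + fun y => (-2:ℝ) * deriv U (-y)) 0 = _
      rw [hadd, h1, h2, ih]
      rw [Finset.sum_Icc_succ_top (by omega : 1 ≤ k + 1), hS, Nat.sub_self]
      simp only [pow_zero, pow_succ]
      ring
  have key : ∀ k : ℕ, iteratedDerivWithin k (Vcorr lam U) (Set.Iic (0:ℝ)) 0 =
      2 * ∑ j ∈ Finset.Icc 1 k, (-1 : ℝ) ^ j * lam ^ (k - j) * iteratedDeriv j U 0 := by
    intro k
    rw [iteratedDerivWithin_Iic_eq (Vcorr lam U) hV k (Set.mem_Iic.mpr le_rfl)]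
    exact main k
  refine ⟨hV0, fun k _ => key k, fun k hk hzero => ?_⟩
  rw [key k]
  have hsplit : Finset.Icc 1 k = insert k (Finset.Icc 1 (k-1)) := by
    ext j
    simp only [Finset.mem_insert, Finset.mem_Icc]
    omega
  rw [hsplit, Finset.sum_insert (by simp only [Finset.mem_Icc]; omega)]
  rw [Finset.sum_eq_zero (fun j hj => by
    obtain ⟨h1, h2⟩ := Finset.mem_Icc.mp hj
    rw [hzero j h1 h2]; ring)]
  simp [Nat.sub_self]
  ring
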